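/- arXiv:2103.10720 — 2 statements merged into one kernel-verified Lean document; each statement's English description precedes it below -/
import Mathlib

section
/- Almost-sure bound on point counts in blocks (Lemma A.1, second claim). Under Assumption 4.1, for every ε ∈ {1,2}^d there exists a constant C > 0 such that P_Z(∑_{k=1}^n 1{λ_n Z_k ∈ Γ_n(ℓ;ε)} > C λ_{1,n}^{q(ε)} λ_{2,n}^{d−q(ε)} n λ_n^{−d} for some ℓ ∈ L_{1,n}, for infinitely many n) = 0, where q(ε) = #{1 ≤ j ≤ d : ε_j = 1}; that is, P_Z-almost surely, for all sufficiently large n and all interior blocks ℓ ∈ L_{1,n}, the number of sampling sites in Γ_n(ℓ;ε) is at most C λ_{1,n}^{q(ε)} λ_{2,n}^{d−q(ε)} n λ_n^{−d}. -/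
open MeasureTheory ProbabilityTheory Filter Set

attribute [local instance] Classical.propDecidable

noncomputable section

namespace SpatialStmt7

variable {d : ℕ}

/-- Indices of the small cubes `a(i + [0,1)^d)` intersecting both `R0` and its complement. -/
def bdryIdx (R0 : Set (Fin d → ℝ)) (a : ℝ) : Set (Fin d → ℤ) :=
  {i | ((Set.univ.pi fun j => Set.Ico (a * (i j : ℝ)) (a * ((i j : ℝ) + 1))) ∩ R0).Nonempty ∧
    ((Set.univ.pi fun j => Set.Ico (a * (i j : ℝ)) (a * ((i j : ℝ) + 1))) ∩ R0ᶜ).Nonempty}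

/-- The sampling region `R_n = λ_n R0`. -/
def Rn (lam : ℕ → ℝ) (R0 : Set (Fin d → ℝ)) (n : ℕ) : Set (Fin d → ℝ) :=
  {x | ∃ z ∈ R0, x = fun j => lam n * z j}

/-- The full block `Γ_n(ℓ; 0) = λ_{3,n}(ℓ + (0,1]^d)`, where `λ_{3,n} = λ_{1,n} + λ_{2,n}`. -/
def fullBlock (lam1 lam2 : ℕ → ℝ) (n : ℕ) (ℓ : Fin d → ℤ) : Set (Fin d → ℝ) :=
  Set.univ.pi fun j =>
    Set.Ioc ((ℓ j : ℝ) * (lam1 n + lam2 n)) (((ℓ j : ℝ) + 1) * (lam1 n + lam2 n))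

/-- The block `Γ_n(ℓ; ε)` for `ε ∈ {1,2}^d`, encoded by `ε : Fin d → Bool` with
`true` standing for `ε_j = 1` (side `λ_{1,n}`) and `false` for `ε_j = 2`
(side `λ_{2,n}`). -/
def subBlock (lam1 lam2 : ℕ → ℝ) (n : ℕ) (ℓ : Fin d → ℤ) (ε : Fin d → Bool) :
    Set (Fin d → ℝ) :=
  Set.univ.pi fun j =>
    if ε j then
      Set.Ioc ((ℓ j : ℝ) * (lam1 n + lam2 n)) ((ℓ j : ℝ) * (lam1 n + lam2 n) + lam1 n)
    else
      Set.Ioc ((ℓ j : ℝ) * (lam1 n + lam2 n) + lam1 n) (((ℓ j : ℝ) + 1) * (lam1 n + lam2 n))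

/-- `q(ε)`, the number of coordinates with `ε_j = 1`. -/
def qeps {d : ℕ} (ε : Fin d → Bool) : ℕ := (Finset.univ.filter fun j => ε j = true).card


section Helpers
open Real in

lemma summable_mul_exp_neg_rpow {b r : ℝ} (hb : 0 < b) (hr : 0 < r) :
    Summable (fun n : ℕ => (n : ℝ) * Real.exp (-(b * (n : ℝ) ^ r))) := by
  have hlog := (isLittleO_log_rpow_atTop hr).def (by positivity : (0:ℝ) < b / 3)
  have hev : ∀ᶠ x : ℝ in atTop, x * Real.exp (-(b * x ^ r)) ≤ x ^ (-2 : ℝ) := by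
    filter_upwards [hlog, eventually_ge_atTop (1 : ℝ)] with x hx hx1
    have hx0 : (0:ℝ) < x := lt_of_lt_of_le zero_lt_one hx1
    have hlogx : 0 ≤ Real.log x := Real.log_nonneg hx1
    have hxr : 0 ≤ x ^ r := Real.rpow_nonneg hx0.le r
    have h3 : 3 * Real.log x ≤ b * x ^ r := by
      rw [Real.norm_eq_abs, Real.norm_eq_abs, abs_of_nonneg hlogx, abs_of_nonneg hxr] at hx
      nlinarith
    have hx3 : x ^ (3:ℝ) ≤ Real.exp (b * x ^ r) := by
      rw [← Real.exp_log (by positivity : (0:ℝ) < x ^ (3:ℝ)), Real.exp_le_exp,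
        Real.log_rpow hx0]
      linarith
    have key : x * Real.exp (-(b * x ^ r)) ≤ x * (x ^ (3:ℝ))⁻¹ := by
      rw [Real.exp_neg]
      gcongr
    refine key.trans (le_of_eq ?_)
    rw [← Real.rpow_neg hx0.le]
    nth_rewrite 1 [← Real.rpow_one x]
    rw [← Real.rpow_add hx0]
    norm_num
  have hevn : ∀ᶠ n : ℕ in atTop, ‖(n : ℝ) * Real.exp (-(b * (n : ℝ) ^ r))‖ ≤ (n:ℝ) ^ (-2:ℝ) := by
    filter_upwards [(tendsto_natCast_atTop_atTop (R := ℝ)).eventually hev,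
      eventually_ge_atTop 1] with n h hn
    have hn0 : (0:ℝ) ≤ (n:ℝ) := Nat.cast_nonneg n
    rwa [Real.norm_eq_abs, abs_of_nonneg (by positivity)]
  refine Summable.of_norm_bounded_eventually_nat ?_ hevn
  exact Real.summable_nat_rpow.mpr (by norm_num)

lemma binom_tail {Ω : Type*} [MeasurableSpace Ω] {α : Type*} [MeasurableSpace α]
    (μ : Measure Ω) [IsProbabilityMeasure μ]
    (W : ℕ → Ω → α) (hW : ∀ i, Measurable (W i))
    (hindep : iIndepFun W μ)
    (D : Set α) (hD : MeasurableSet D)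
    (p : ℝ) (hp : ∀ k, (μ ((W k) ⁻¹' D)).toReal ≤ p) (n : ℕ) (t : ℝ) :
    μ {ω | t ≤ (((Finset.range n).filter fun k => W k ω ∈ D).card : ℝ)}
      ≤ ENNReal.ofReal (Real.exp (n * p * (Real.exp 1 - 1) - t)) := by
  classical
  set X : ℕ → Ω → ℝ := fun k ω => D.indicator (fun _ => (1:ℝ)) (W k ω) with hX
  have hXmeas : ∀ k, Measurable (X k) := fun k =>
    (measurable_const.indicator hD).comp (hW k)
  have hXindep : iIndepFun X μ :=
    hindep.comp _ (fun k => measurable_const.indicator hD)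
  have hX01 : ∀ k ω, X k ω = 0 ∨ X k ω = 1 := by
    intro k ω
    by_cases h : W k ω ∈ D
    · right; simp [hX, Set.indicator_of_mem h]
    · left; simp [hX, Set.indicator_of_notMem h]
  set S : Ω → ℝ := ∑ k ∈ Finset.range n, X k with hS
  have hcount : ∀ ω, (((Finset.range n).filter fun k => W k ω ∈ D).card : ℝ) = S ω := by
    intro ω
    rw [hS, Finset.sum_apply, Finset.card_filter]
    push_cast
    refine Finset.sum_congr rfl fun k _ => ?_
    by_cases h : W k ω ∈ D <;> simp [hX, h, Set.indicator_of_mem, Set.indicator_of_notMem]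
  have hSle : ∀ ω, S ω ≤ n := by
    intro ω
    rw [hS, Finset.sum_apply]
    calc ∑ k ∈ Finset.range n, X k ω ≤ ∑ k ∈ Finset.range n, 1 := by
          refine Finset.sum_le_sum fun k _ => ?_
          rcases hX01 k ω with h | h <;> rw [h] <;> norm_num
      _ = n := by simp
  have hS0 : ∀ ω, 0 ≤ S ω := by
    intro ω
    rw [hS, Finset.sum_apply]
    refine Finset.sum_nonneg fun k _ => ?_
    rcases hX01 k ω with h | h <;> rw [h] <;> norm_num
  have hSmeas : Measurable S := by
    have h := Finset.measurable_sum (Finset.range n) (fun k _ => hXmeas k)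
    have he : S = fun ω => ∑ k ∈ Finset.range n, X k ω := by
      ext ω; rw [hS, Finset.sum_apply]
    rwa [he]
  have hint : Integrable (fun ω => Real.exp (1 * S ω)) μ := by
    refine Integrable.mono' (integrable_const (Real.exp n)) ?_ ?_
    · exact (hSmeas.const_mul 1).exp.aestronglyMeasurable
    · refine Filter.Eventually.of_forall fun ω => ?_
      rw [Real.norm_eq_abs, abs_of_pos (Real.exp_pos _), one_mul, Real.exp_le_exp]
      exact hSle ω
  have hp0 : 0 ≤ p := le_trans ENNReal.toReal_nonneg (hp 0)
  -- Chernoff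
  have hch := measure_ge_le_exp_mul_mgf (X := S) (μ := μ) t zero_le_one hint
  -- mgf bound
  have hmgf : mgf S μ 1 ≤ Real.exp (n * p * (Real.exp 1 - 1)) := by
    rw [hS, hXindep.mgf_sum hXmeas]
    have hbd : ∀ k ∈ Finset.range n, mgf (X k) μ 1 ≤ Real.exp (p * (Real.exp 1 - 1)) := by
      intro k _
      have hptw : ∀ ω, Real.exp (1 * X k ω) = 1 + (Real.exp 1 - 1) * X k ω := by
        intro ω
        rcases hX01 k ω with h | h <;> rw [h] <;> simp
      have hXint : Integrable (X k) μ := by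
        refine Integrable.mono' (integrable_const 1) (hXmeas k).aestronglyMeasurable ?_
        refine Filter.Eventually.of_forall fun ω => ?_
        rcases hX01 k ω with h | h <;> rw [h] <;> norm_num
      have hXeq : (fun ω => X k ω) = (W k ⁻¹' D).indicator (fun _ => (1:ℝ)) := by
        ext ω
        by_cases h : W k ω ∈ D <;>
          simp [hX, h, Set.indicator_of_mem, Set.indicator_of_notMem, Set.mem_preimage]
      have hXint' : ∫ ω, X k ω ∂μ = (μ ((W k) ⁻¹' D)).toReal := by
        rw [hXeq, integral_indicator_const (1:ℝ) ((hW k) hD)]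
        simp [Measure.real]
      have : mgf (X k) μ 1 = 1 + (Real.exp 1 - 1) * (μ ((W k) ⁻¹' D)).toReal := by
        rw [mgf]
        calc ∫ ω, Real.exp (1 * X k ω) ∂μ
            = ∫ ω, (1 + (Real.exp 1 - 1) * X k ω) ∂μ := by
              exact integral_congr_ae (Filter.Eventually.of_forall hptw)
          _ = 1 + (Real.exp 1 - 1) * (μ ((W k) ⁻¹' D)).toReal := by
              rw [integral_add (integrable_const 1) (hXint.const_mul _),
                integral_const_mul, hXint']
              simp
      rw [this]
      have h1 : 1 + (Real.exp 1 - 1) * (μ ((W k) ⁻¹' D)).toReal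
          ≤ 1 + (Real.exp 1 - 1) * p := by
        have he1 : (0:ℝ) ≤ Real.exp 1 - 1 := by
          have := Real.add_one_le_exp (1:ℝ); linarith
        nlinarith [hp k]
      refine h1.trans ?_
      have := Real.add_one_le_exp ((Real.exp 1 - 1) * p)
      calc 1 + (Real.exp 1 - 1) * p = (Real.exp 1 - 1) * p + 1 := by ring
        _ ≤ Real.exp ((Real.exp 1 - 1) * p) := this
        _ = Real.exp (p * (Real.exp 1 - 1)) := by ring_nf
    calc ∏ k ∈ Finset.range n, mgf (X k) μ 1
        ≤ ∏ k ∈ Finset.range n, Real.exp (p * (Real.exp 1 - 1)) :=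
          Finset.prod_le_prod (fun k _ => mgf_nonneg) hbd
      _ = Real.exp (p * (Real.exp 1 - 1)) ^ n := by rw [Finset.prod_const, Finset.card_range]
      _ = Real.exp (n * p * (Real.exp 1 - 1)) := by
          rw [← Real.exp_nat_mul]; ring_nf
  -- combine
  have hev : {ω | t ≤ (((Finset.range n).filter fun k => W k ω ∈ D).card : ℝ)}
      = {ω | t ≤ S ω} := by
    ext ω; simp [hcount ω]
  rw [hev]
  have htR : (μ {ω | t ≤ S ω}).toReal ≤ Real.exp (n * p * (Real.exp 1 - 1) - t) := by
    refine hch.trans ?_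
    calc Real.exp (-1 * t) * mgf S μ 1
        ≤ Real.exp (-1 * t) * Real.exp (n * p * (Real.exp 1 - 1)) :=
          mul_le_mul_of_nonneg_left hmgf (Real.exp_pos (-1*t)).le
      _ = Real.exp (n * p * (Real.exp 1 - 1) - t) := by
          rw [← Real.exp_add]; ring_nf
  calc μ {ω | t ≤ S ω} = ENNReal.ofReal ((μ {ω | t ≤ S ω}).toReal) := by
        rw [ENNReal.ofReal_toReal (measure_ne_top _ _)]
    _ ≤ ENNReal.ofReal (Real.exp (n * p * (Real.exp 1 - 1) - t)) :=
        ENNReal.ofReal_le_ofReal htR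

end Helpers

lemma qeps_le (ε : Fin d → Bool) : qeps ε ≤ d := by
  simpa [qeps] using (Finset.card_filter_le Finset.univ fun j => ε j = true)

lemma volume_scaled_subBlock (lam lam1 lam2 : ℕ → ℝ) (n : ℕ) (ℓ : Fin d → ℤ)
    (ε : Fin d → Bool) (h1 : 0 < lam1 n) (h2 : 0 < lam2 n) (hl : 0 < lam n) :
    volume ((fun z : Fin d → ℝ => fun j => lam n * z j) ⁻¹' subBlock lam1 lam2 n ℓ ε)
      = ENNReal.ofReal (lam1 n ^ qeps ε * lam2 n ^ (d - qeps ε) / lam n ^ d) := by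
  classical
  have key : ∀ a b x : ℝ, lam n * x ∈ Set.Ioc a b ↔ x ∈ Set.Ioc (a / lam n) (b / lam n) := by
    intro a b x
    rw [Set.mem_Ioc, Set.mem_Ioc]
    constructor <;> rintro ⟨hlo, hhi⟩ <;> constructor
    · rw [div_lt_iff₀ hl]; linarith
    · rw [le_div_iff₀ hl]; linarith
    · rw [div_lt_iff₀ hl] at hlo; linarith
    · rw [le_div_iff₀ hl] at hhi; linarith
  set T : Fin d → Set ℝ := fun j =>
    if ε j then
      Set.Ioc ((ℓ j : ℝ) * (lam1 n + lam2 n) / lam n)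
        (((ℓ j : ℝ) * (lam1 n + lam2 n) + lam1 n) / lam n)
    else
      Set.Ioc (((ℓ j : ℝ) * (lam1 n + lam2 n) + lam1 n) / lam n)
        (((ℓ j : ℝ) + 1) * (lam1 n + lam2 n) / lam n) with hT
  have hD : (fun z : Fin d → ℝ => fun j => lam n * z j) ⁻¹' subBlock lam1 lam2 n ℓ ε
      = Set.univ.pi T := by
    ext z
    simp only [Set.mem_preimage, subBlock, Set.mem_pi, Set.mem_univ, true_imp_iff]
    refine forall_congr' fun j => ?_
    by_cases hj : ε j
    · rw [hT]; simp only [if_pos hj]; exact key _ _ _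
    · rw [hT]; simp only [if_neg hj]; exact key _ _ _
  have hvol : ∀ j, volume (T j) = ENNReal.ofReal ((if ε j then lam1 n else lam2 n) / lam n) := by
    intro j
    by_cases hj : ε j
    · rw [hT]; simp only [if_pos hj, Real.volume_Ioc]
      congr 1
      rw [div_sub_div_same]
      congr 1; ring
    · rw [hT]; simp only [if_neg hj, Real.volume_Ioc]
      congr 1
      rw [div_sub_div_same]
      congr 1; ring
  rw [hD, volume_pi_pi]
  simp_rw [hvol]
  have hnn : ∀ j ∈ Finset.univ, (0:ℝ) ≤ (if ε j then lam1 n else lam2 n) / lam n := by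
    intro j _
    by_cases hj : ε j <;> simp [hj] <;> positivity
  rw [← ENNReal.ofReal_prod_of_nonneg hnn]
  congr 1
  rw [Finset.prod_div_distrib, Finset.prod_const,
    Finset.prod_ite (f := fun _ => lam1 n) (g := fun _ => lam2 n),
    Finset.prod_const, Finset.prod_const, Finset.card_univ, Fintype.card_fin]
  have hcard : (Finset.filter (fun x => ¬ε x = true) Finset.univ).card = d - qeps ε := by
    have := Finset.card_filter_add_card_filter_not
      (s := (Finset.univ : Finset (Fin d))) (p := fun j => ε j = true)
    simp only [Finset.card_univ, Fintype.card_fin] at this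
    simp only [qeps]
    omega
  rw [hcard]
  rfl

lemma block_index_mem (lam lam1 lam2 : ℕ → ℝ) (R0 : Set (Fin d → ℝ))
    (hR0Icc : R0 ⊆ Set.univ.pi fun _ => Set.Icc (-(1/2) : ℝ) (1/2)) (n : ℕ)
    (hl3 : 1 ≤ lam1 n + lam2 n) (hlam : 1 ≤ lam n) (ℓ : Fin d → ℤ)
    (hsub : fullBlock lam1 lam2 n ℓ ⊆ Rn lam R0 n) :
    ℓ ∈ Finset.Icc (fun _ : Fin d => -(⌈lam n⌉ + 1)) (fun _ => ⌈lam n⌉ + 1) := by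
  have hl3pos : (0:ℝ) < lam1 n + lam2 n := lt_of_lt_of_le zero_lt_one hl3
  have hy : (fun j => ((ℓ j : ℝ) + 1) * (lam1 n + lam2 n)) ∈ fullBlock lam1 lam2 n ℓ := by
    intro j _
    exact ⟨mul_lt_mul_of_pos_right (by linarith) hl3pos, le_refl _⟩
  obtain ⟨z, hz, hyz⟩ := hsub hy
  have hzI := hR0Icc hz
  rw [Finset.mem_Icc]
  constructor <;> rw [Pi.le_def] <;> intro j
  all_goals
    have hj : ((ℓ j : ℝ) + 1) * (lam1 n + lam2 n) = lam n * z j := congrFun hyz j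
    have hzj : z j ∈ Set.Icc (-(1/2):ℝ) (1/2) := hzI j (Set.mem_univ j)
    rw [Set.mem_Icc] at hzj
    have hub : ((ℓ j : ℝ) + 1) * (lam1 n + lam2 n) ≤ lam n / 2 := by
      rw [hj]; nlinarith [hzj.2]
    have hlb : -(lam n / 2) ≤ ((ℓ j : ℝ) + 1) * (lam1 n + lam2 n) := by
      rw [hj]; nlinarith [hzj.1]
    have hceil : lam n ≤ (⌈lam n⌉ : ℝ) := Int.le_ceil _
  · -- lower bound : -(⌈lam n⌉ + 1) ≤ ℓ j
    have : -((⌈lam n⌉:ℝ) + 1) ≤ (ℓ j : ℝ) := by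
      by_cases hc : (ℓ j : ℝ) + 1 ≤ 0
      · have h1 : ((ℓ j : ℝ) + 1) * (lam1 n + lam2 n) ≤ (ℓ j : ℝ) + 1 := by
          nlinarith
        nlinarith
      · push_neg at hc; nlinarith
    exact_mod_cast this
  · -- upper bound : ℓ j ≤ ⌈lam n⌉ + 1
    have : (ℓ j : ℝ) ≤ (⌈lam n⌉:ℝ) + 1 := by
      by_cases hc : 0 ≤ (ℓ j : ℝ) + 1
      · have h1 : (ℓ j : ℝ) + 1 ≤ ((ℓ j : ℝ) + 1) * (lam1 n + lam2 n) := by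
          nlinarith
        nlinarith
      · push_neg at hc; nlinarith
    exact_mod_cast this

lemma block_card_le (lam : ℕ → ℝ) (n : ℕ) (hlam : 1 ≤ lam n) :
    ((Finset.Icc (fun _ : Fin d => -(⌈lam n⌉ + 1)) (fun _ => ⌈lam n⌉ + 1)).card : ℝ)
      ≤ (8 * lam n) ^ d := by
  rw [Pi.card_Icc]
  have h1 : ∀ j : Fin d, ((Finset.Icc (-(⌈lam n⌉ + 1)) (⌈lam n⌉ + 1)).card : ℝ) ≤ 8 * lam n := by
    intro j
    rw [Int.card_Icc]
    have hceil : lam n ≤ (⌈lam n⌉ : ℝ) := Int.le_ceil _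
    have hceil2 : (⌈lam n⌉ : ℝ) ≤ lam n + 1 := by
      have := Int.ceil_lt_add_one (lam n); linarith
    have hge : (0:ℤ) ≤ ⌈lam n⌉ + 1 + 1 - -(⌈lam n⌉ + 1) := by
      have : (0:ℝ) ≤ (⌈lam n⌉:ℝ) := by linarith
      have : (0:ℤ) ≤ ⌈lam n⌉ := by exact_mod_cast this
      omega
    have h2 : (((⌈lam n⌉ + 1 + 1 - -(⌈lam n⌉ + 1)).toNat : ℕ) : ℝ)
        = ((⌈lam n⌉ + 1 + 1 - -(⌈lam n⌉ + 1) : ℤ) : ℝ) := by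
      rw [← Int.cast_natCast, Int.toNat_of_nonneg hge]
    rw [h2]
    push_cast
    linarith
  calc ((∏ j : Fin d, (Finset.Icc (-(⌈lam n⌉ + 1)) (⌈lam n⌉ + 1)).card : ℕ) : ℝ)
      = ∏ j : Fin d, ((Finset.Icc (-(⌈lam n⌉ + 1)) (⌈lam n⌉ + 1)).card : ℝ) := by push_cast; rfl
    _ ≤ ∏ j : Fin d, (8 * lam n) := by
        refine Finset.prod_le_prod (fun j _ => by positivity) (fun j _ => h1 j)
    _ = (8 * lam n) ^ d := by rw [Finset.prod_const, Finset.card_univ, Fintype.card_fin]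

/-- **Almost-sure bound on point counts in blocks** (Lemma A.1, second claim).
Under Assumption 4.1, for every `ε ∈ {1,2}^d` there is a constant `C > 0` such that,
almost surely, eventually in `n`, every interior block `Γ_n(ℓ; ε)`, `ℓ ∈ L_{1,n}`,
contains at most `C λ_{1,n}^{q(ε)} λ_{2,n}^{d−q(ε)} n λ_n^{−d}` of the `n` rescaled
sampling sites. -/
theorem count_blocks
    (hd : 1 ≤ d) {ΩZ : Type*} [MeasurableSpace ΩZ]
    (PZ : Measure ΩZ) [IsProbabilityMeasure PZ]
    (R0star R0 : Set (Fin d → ℝ))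
    (hR0open : IsOpen R0star) (hR0conn : IsConnected R0star)
    (hR0zero : (0 : Fin d → ℝ) ∈ R0star)
    (hR0small : R0star ⊆ Set.univ.pi fun _ => Set.Ioc (-(1 / 2) : ℝ) (1 / 2))
    (hR0sub : R0star ⊆ R0) (hR0cl : R0 ⊆ closure R0star) (hR0meas : MeasurableSet R0)
    (hboundary : ∀ a : ℕ → ℝ, (∀ k, 0 < a k) → Tendsto a atTop (nhds 0) →
      ∃ K > (0 : ℝ), ∀ k : ℕ, (bdryIdx R0 (a k)).Finite ∧
        ((bdryIdx R0 (a k)).ncard : ℝ) ≤ K * a k ^ ((1 : ℝ) - d))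
    (f : (Fin d → ℝ) → ℝ)
    (hfcont : ContinuousOn f (closure R0)) (hfpos : ∀ x ∈ closure R0, 0 < f x)
    (Z : ΩZ → ℕ → Fin d → ℝ)
    (hZmeas : ∀ i, Measurable fun ωZ => Z ωZ i)
    (hZiid : iIndepFun (fun i ωZ => Z ωZ i) PZ)
    (hZlaw : ∀ i, PZ.map (fun ωZ => Z ωZ i) =
      volume.withDensity (R0.indicator fun x => ENNReal.ofReal (f x)))
    (lam lam1 lam2 : ℕ → ℝ)
    (hlampos : ∀ n, 0 < lam n) (hlam1pos : ∀ n, 0 < lam1 n) (hlam2pos : ∀ n, 0 < lam2 n)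
    (hlam : Tendsto lam atTop atTop) (hlam1 : Tendsto lam1 atTop atTop)
    (hlam2 : Tendsto lam2 atTop atTop)
    (hlam21 : Tendsto (fun n => lam2 n / lam1 n) atTop (nhds 0))
    (hlam1lam : Tendsto (fun n => lam1 n / lam n) atTop (nhds 0))
    (κ : ENNReal) (hκ0 : κ ≠ 0)
    (hκ : Tendsto (fun n : ℕ => ENNReal.ofReal ((n : ℝ) * lam n ^ (-(d : ℝ)))) atTop (nhds κ))
    (κbar : ℝ) (hκbar : 0 < κbar) (hlamlb : ∀ n : ℕ, 1 ≤ n → (n : ℝ) ^ κbar ≤ lam n)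
    (c : ℝ) (hc0 : 0 < c) (hc12 : c < 1 / 2)
    (hrate : ∃ K > (0 : ℝ), ∀ n : ℕ, 1 ≤ n → (Real.sqrt (lam2 n))⁻¹ * (n : ℝ) ^ c ≤ K) :
    ∀ ε : Fin d → Bool, ∃ C > (0 : ℝ),
      ∀ᵐ ωZ ∂PZ, ∀ᶠ n : ℕ in atTop, ∀ ℓ : Fin d → ℤ,
        fullBlock lam1 lam2 n ℓ ⊆ Rn lam R0 n →
        (((Finset.range n).filter fun k =>
            (fun j => lam n * Z ωZ k j) ∈ subBlock lam1 lam2 n ℓ ε).card : ℝ)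
          ≤ C * lam1 n ^ (qeps ε : ℝ) * lam2 n ^ ((d : ℝ) - qeps ε) *
              ((n : ℝ) * lam n ^ (-(d : ℝ))) := by
  classical
  -- bound for f on closure R0
  have hR0Icc : R0 ⊆ Set.univ.pi fun _ : Fin d => Set.Icc (-(1/2) : ℝ) (1/2) := by
    intro x hx
    have h2 : closure R0star ⊆ Set.univ.pi fun _ : Fin d => Set.Icc (-(1/2) : ℝ) (1/2) :=
      closure_minimal (hR0small.trans (Set.pi_mono fun j _ => Set.Ioc_subset_Icc_self))
        (isClosed_set_pi fun j _ => isClosed_Icc)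
    exact h2 (hR0cl hx)
  have hclIcc : closure R0 ⊆ Set.univ.pi fun _ : Fin d => Set.Icc (-(1/2) : ℝ) (1/2) :=
    closure_minimal hR0Icc (isClosed_set_pi fun j _ => isClosed_Icc)
  have hcpt : IsCompact (closure R0) :=
    (isCompact_univ_pi fun _ => isCompact_Icc).of_isClosed_subset isClosed_closure hclIcc
  have hne : (closure R0).Nonempty := ⟨0, subset_closure (hR0sub hR0zero)⟩
  obtain ⟨x₀, hx₀, hMmax⟩ := hcpt.exists_isMaxOn hne hfcont
  have hM : ∀ y ∈ closure R0, f y ≤ f x₀ := fun y hy => hMmax hy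
  set M := f x₀ with hMdef
  have hM0 : 0 ≤ M := (hfpos x₀ hx₀).le
  intro ε
  set q := qeps ε with hqdef
  have hq : q ≤ d := qeps_le ε
  set C := (M + 1) * Real.exp 1 with hCdef
  have hC0 : 0 < C := by positivity
  refine ⟨C, hC0, ?_⟩
  set v : ℕ → ℝ := fun n => lam1 n ^ q * lam2 n ^ (d - q) / lam n ^ d with hvdef
  have hv0 : ∀ n, 0 ≤ v n := fun n => by
    have h1 := (hlam1pos n).le; have h2 := (hlam2pos n).le; have h3 := (hlampos n).le
    rw [hvdef]; positivity
  have hTeq : ∀ n : ℕ, C * lam1 n ^ (q:ℝ) * lam2 n ^ ((d:ℝ) - (q:ℝ)) *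
      ((n:ℝ) * lam n ^ (-(d:ℝ))) = C * ((n:ℝ) * v n) := by
    intro n
    have h1 : lam1 n ^ (q:ℝ) = lam1 n ^ q := Real.rpow_natCast _ _
    have h2 : lam2 n ^ ((d:ℝ) - (q:ℝ)) = lam2 n ^ (d - q) := by
      rw [← Nat.cast_sub hq, Real.rpow_natCast]
    have h3 : lam n ^ (-(d:ℝ)) = (lam n ^ d)⁻¹ := by
      rw [Real.rpow_neg (hlampos n).le, Real.rpow_natCast]
    have h4 : (0:ℝ) < lam n ^ d := pow_pos (hlampos n) d
    rw [h1, h2, h3]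
    simp only [hvdef]
    field_simp
  set w : ℕ → ℝ := fun n => (n:ℝ) / lam n ^ d with hwdef
  have hweq : ∀ n : ℕ, (n:ℝ) * lam n ^ (-(d:ℝ)) = w n := by
    intro n
    have h3 : lam n ^ (-(d:ℝ)) = (lam n ^ d)⁻¹ := by
      rw [Real.rpow_neg (hlampos n).le, Real.rpow_natCast]
    rw [h3]
    simp [hwdef, div_eq_mul_inv]
  -- δ from hκ
  obtain ⟨δ, hδ0, hδev⟩ : ∃ δ : ℝ, 0 < δ ∧ ∀ᶠ n : ℕ in atTop, δ ≤ w n := by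
    obtain ⟨δ', hδ'0, hδ'top, hδ'κ⟩ : ∃ δ' : ENNReal, δ' ≠ 0 ∧ δ' ≠ ⊤ ∧ δ' < κ := by
      by_cases hκtop : κ = ⊤
      · exact ⟨1, one_ne_zero, by simp, by simp [hκtop]⟩
      · exact ⟨κ / 2, (ENNReal.half_pos hκ0).ne', (ENNReal.div_lt_top hκtop (by norm_num)).ne,
          ENNReal.half_lt_self hκ0 hκtop⟩
    refine ⟨δ'.toReal, ENNReal.toReal_pos hδ'0 hδ'top, ?_⟩
    filter_upwards [hκ.eventually (eventually_gt_nhds hδ'κ)] with n hn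
    rw [← hweq n]
    exact ((ENNReal.lt_ofReal_iff_toReal_lt hδ'top).mp hn).le
  -- K from hrate
  obtain ⟨K, hK0, hKrate⟩ := hrate
  set g : ℕ → ℝ := fun n => (n:ℝ) ^ (2 * c) with hgdef
  have hglam2 : ∀ n : ℕ, 1 ≤ n → g n ≤ K ^ 2 * lam2 n := by
    intro n hn
    have hn0 : (0:ℝ) < n := by exact_mod_cast hn
    have hs : 0 < Real.sqrt (lam2 n) := Real.sqrt_pos.mpr (hlam2pos n)
    have h1 : (n:ℝ) ^ c ≤ Real.sqrt (lam2 n) * K :=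
      (inv_mul_le_iff₀ hs).mp (hKrate n hn)
    have hg : g n = (n:ℝ) ^ c * (n:ℝ) ^ c := by
      rw [hgdef, ← Real.rpow_add hn0]; congr 1; ring
    have hsq : Real.sqrt (lam2 n) * Real.sqrt (lam2 n) = lam2 n :=
      Real.mul_self_sqrt (hlam2pos n).le
    have hc0' : 0 ≤ (n:ℝ) ^ c := Real.rpow_nonneg hn0.le c
    nlinarith [mul_le_mul h1 h1 hc0' (by positivity : (0:ℝ) ≤ Real.sqrt (lam2 n) * K)]
  have hg1 : ∀ n : ℕ, 1 ≤ n → 1 ≤ g n := by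
    intro n hn
    rw [hgdef]
    refine Real.one_le_rpow (by exact_mod_cast hn) (by positivity)
  -- eventual conditions
  have hev : ∀ᶠ n : ℕ in atTop,
      1 ≤ lam1 n + lam2 n ∧ lam2 n ≤ lam1 n ∧ δ ≤ w n ∧ 1 ≤ lam n ∧ 1 ≤ n := by
    have h21 : ∀ᶠ n : ℕ in atTop, lam2 n ≤ lam1 n := by
      filter_upwards [hlam21.eventually_lt_const one_pos] with n hn
      exact ((div_lt_one (hlam1pos n)).mp hn).le
    filter_upwards [hlam1.eventually_ge_atTop 1, h21, hδev, hlam.eventually_ge_atTop 1,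
      eventually_ge_atTop 1] with n h1 h2 h3 h4 h5
    exact ⟨by linarith [(hlam2pos n)], h2, h3, h4, h5⟩
  obtain ⟨N, hN⟩ := eventually_atTop.mp hev
  set b : ℝ := δ / (K ^ 2) ^ d with hbdef
  have hb0 : 0 < b := by rw [hbdef]; positivity
  set A : ℝ := 8 ^ d / δ with hAdef
  have hA0 : 0 ≤ A := by rw [hAdef]; positivity
  set Bad : ℕ → Set ΩZ := fun n => {ω | ∃ ℓ : Fin d → ℤ,
    fullBlock lam1 lam2 n ℓ ⊆ Rn lam R0 n ∧
    C * ((n:ℝ) * v n) < (((Finset.range n).filter fun k =>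
      (fun j => lam n * Z ω k j) ∈ subBlock lam1 lam2 n ℓ ε).card : ℝ)} with hBaddef
  -- key estimate
  have key : ∀ n : ℕ, N ≤ n →
      PZ (Bad n) ≤ ENNReal.ofReal (A * n * Real.exp (-(b * (n:ℝ) ^ (2 * c)))) := by
    intro n hn
    obtain ⟨hl3, h21, hδn, hlamge1, hn1⟩ := hN n hn
    have hn0 : (0:ℝ) < n := by exact_mod_cast hn1
    set F : Finset (Fin d → ℤ) :=
      Finset.Icc (fun _ : Fin d => -(⌈lam n⌉ + 1)) (fun _ => ⌈lam n⌉ + 1) with hFdef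
    -- per-block bound
    have hstep : ∀ ℓ : Fin d → ℤ,
        PZ {ω | C * ((n:ℝ) * v n) ≤ (((Finset.range n).filter fun k =>
            (fun j => lam n * Z ω k j) ∈ subBlock lam1 lam2 n ℓ ε).card : ℝ)}
          ≤ ENNReal.ofReal (Real.exp (-(b * g n))) := by
      intro ℓ
      set D := (fun z : Fin d → ℝ => fun j => lam n * z j) ⁻¹' subBlock lam1 lam2 n ℓ ε
        with hDdef
      have hsubmeas : MeasurableSet (subBlock lam1 lam2 n ℓ ε) := by
        refine MeasurableSet.univ_pi fun j => ?_
        by_cases hj : ε j = true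
        · rw [if_pos hj]; exact measurableSet_Ioc
        · rw [if_neg hj]; exact measurableSet_Ioc
      have hscale : Measurable (fun z : Fin d → ℝ => fun j => lam n * z j) :=
        measurable_pi_lambda _ fun j => by fun_prop
      have hDmeas : MeasurableSet D := hscale hsubmeas
      have hvolD : volume D = ENNReal.ofReal (v n) := by
        rw [hDdef, volume_scaled_subBlock lam lam1 lam2 n ℓ ε (hlam1pos n) (hlam2pos n)
          (hlampos n), hvdef]
      have hp : ∀ k : ℕ, (PZ ((fun ω => Z ω k) ⁻¹' D)).toReal ≤ M * v n := by
        intro k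
        have hmap : PZ ((fun ω => Z ω k) ⁻¹' D) = (PZ.map (fun ω => Z ω k)) D :=
          (Measure.map_apply (hZmeas k) hDmeas).symm
        have hle : PZ ((fun ω => Z ω k) ⁻¹' D) ≤ ENNReal.ofReal (M * v n) := by
          rw [hmap, hZlaw k, withDensity_apply _ hDmeas]
          calc ∫⁻ x in D, R0.indicator (fun x => ENNReal.ofReal (f x)) x ∂volume
              ≤ ∫⁻ _x in D, ENNReal.ofReal M ∂volume := by
                refine lintegral_mono fun x => ?_
                by_cases hx : x ∈ R0
                · rw [Set.indicator_of_mem hx]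
                  exact ENNReal.ofReal_le_ofReal (hM x (subset_closure hx))
                · rw [Set.indicator_of_notMem hx]; exact zero_le
            _ = ENNReal.ofReal M * volume D := by rw [setLIntegral_const]
            _ = ENNReal.ofReal (M * v n) := by
                rw [hvolD, ← ENNReal.ofReal_mul hM0]
        exact ENNReal.toReal_le_of_le_ofReal (mul_nonneg hM0 (hv0 n)) hle
      have hbt := binom_tail PZ (fun i ωZ => Z ωZ i) hZmeas hZiid D hDmeas (M * v n) hp n
        (C * ((n:ℝ) * v n))
      have hseteq : {ω | C * ((n:ℝ) * v n) ≤ (((Finset.range n).filter fun k =>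
          (fun j => lam n * Z ω k j) ∈ subBlock lam1 lam2 n ℓ ε).card : ℝ)}
          = {ω | C * ((n:ℝ) * v n) ≤ (((Finset.range n).filter fun k =>
          (fun i ωZ => Z ωZ i) k ω ∈ D).card : ℝ)} := by
        ext ω
        have : ((Finset.range n).filter fun k =>
            (fun j => lam n * Z ω k j) ∈ subBlock lam1 lam2 n ℓ ε)
            = ((Finset.range n).filter fun k => (fun i ωZ => Z ωZ i) k ω ∈ D) := by
          refine Finset.filter_congr fun k _ => ?_
          simp only [hDdef, Set.mem_preimage]
        simp only [Set.mem_setOf_eq, this]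
      rw [hseteq]
      refine hbt.trans (ENNReal.ofReal_le_ofReal (Real.exp_le_exp.mpr ?_))
      -- exponent inequality
      have hnv : 0 ≤ (n:ℝ) * v n := mul_nonneg hn0.le (hv0 n)
      have he2 : (2:ℝ) ≤ Real.exp 1 := by
        have := Real.add_one_le_exp (1:ℝ); linarith
      have hE : (n:ℝ) * (M * v n) * (Real.exp 1 - 1) - C * ((n:ℝ) * v n)
          ≤ -((n:ℝ) * v n) := by
        rw [hCdef]; nlinarith
      have hchain : b * g n ≤ (n:ℝ) * v n := by
        have hlam2d : lam2 n ^ d ≤ lam1 n ^ q * lam2 n ^ (d - q) := by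
          calc lam2 n ^ d = lam2 n ^ q * lam2 n ^ (d - q) := by
                rw [← pow_add]; congr 1; omega
            _ ≤ lam1 n ^ q * lam2 n ^ (d - q) :=
                mul_le_mul_of_nonneg_right (pow_le_pow_left₀ (hlam2pos n).le h21 q)
                  (pow_nonneg (hlam2pos n).le _)
        have hnveq : (n:ℝ) * v n = (lam1 n ^ q * lam2 n ^ (d - q)) * w n := by
          simp only [hvdef, hwdef]; ring
        have hgd : g n / (K ^ 2) ^ d ≤ lam2 n ^ d := by
          have h1 : g n / K ^ 2 ≤ lam2 n := by
            rw [div_le_iff₀ (by positivity : (0:ℝ) < K ^ 2)]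
            calc g n ≤ K ^ 2 * lam2 n := hglam2 n hn1
              _ = lam2 n * K ^ 2 := by ring
          have h2 : (g n / K ^ 2) ^ d ≤ lam2 n ^ d :=
            pow_le_pow_left₀ (by positivity) h1 d
          have h3 : g n / (K ^ 2) ^ d ≤ (g n / K ^ 2) ^ d := by
            rw [div_pow]
            refine (div_le_div_iff_of_pos_right (by positivity)).mpr ?_
            calc g n = g n ^ 1 := (pow_one _).symm
              _ ≤ g n ^ d := pow_le_pow_right₀ (hg1 n hn1) hd
          exact h3.trans h2
        have hwpos : 0 ≤ w n := by
          rw [hwdef]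
          positivity
        calc b * g n = δ * (g n / (K ^ 2) ^ d) := by rw [hbdef]; ring
          _ ≤ δ * lam2 n ^ d := mul_le_mul_of_nonneg_left hgd hδ0.le
          _ ≤ w n * (lam1 n ^ q * lam2 n ^ (d - q)) := by
              refine mul_le_mul hδn hlam2d (pow_nonneg (hlam2pos n).le d) hwpos
          _ = (n:ℝ) * v n := by rw [hnveq]; ring
      linarith
    -- union bound
    have hsub : Bad n ⊆ ⋃ ℓ ∈ F, {ω | C * ((n:ℝ) * v n) ≤ (((Finset.range n).filter fun k =>
        (fun j => lam n * Z ω k j) ∈ subBlock lam1 lam2 n ℓ ε).card : ℝ)} := by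
      rintro ω ⟨ℓ, hℓsub, hℓgt⟩
      refine Set.mem_biUnion ?_ hℓgt.le
      rw [hFdef]
      exact block_index_mem lam lam1 lam2 R0 hR0Icc n hl3 hlamge1 ℓ hℓsub
    have hlamdn : lam n ^ d ≤ (n:ℝ) / δ := by
      rw [le_div_iff₀ hδ0]
      have := hδn
      rw [hwdef] at this
      have hpow : (0:ℝ) < lam n ^ d := pow_pos (hlampos n) d
      rw [le_div_iff₀ hpow] at this
      linarith
    have hcard : ((F.card : ℝ)) ≤ (8 * lam n) ^ d := by
      rw [hFdef]; exact block_card_le lam n hlamge1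
    calc PZ (Bad n) ≤ PZ (⋃ ℓ ∈ F, {ω | C * ((n:ℝ) * v n) ≤ (((Finset.range n).filter fun k =>
          (fun j => lam n * Z ω k j) ∈ subBlock lam1 lam2 n ℓ ε).card : ℝ)}) :=
        measure_mono hsub
      _ ≤ ∑ ℓ ∈ F, PZ {ω | C * ((n:ℝ) * v n) ≤ (((Finset.range n).filter fun k =>
          (fun j => lam n * Z ω k j) ∈ subBlock lam1 lam2 n ℓ ε).card : ℝ)} :=
        measure_biUnion_finset_le _ _
      _ ≤ ∑ _ℓ ∈ F, ENNReal.ofReal (Real.exp (-(b * g n))) :=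
        Finset.sum_le_sum fun ℓ _ => hstep ℓ
      _ = (F.card : ENNReal) * ENNReal.ofReal (Real.exp (-(b * g n))) := by
        rw [Finset.sum_const, nsmul_eq_mul]
      _ ≤ ENNReal.ofReal ((8 * lam n) ^ d) * ENNReal.ofReal (Real.exp (-(b * g n))) := by
        refine mul_le_mul_left ?_ _
        rw [← ENNReal.ofReal_natCast]
        exact ENNReal.ofReal_le_ofReal hcard
      _ = ENNReal.ofReal ((8 * lam n) ^ d * Real.exp (-(b * g n))) := by
        rw [← ENNReal.ofReal_mul (by positivity)]
      _ ≤ ENNReal.ofReal (A * n * Real.exp (-(b * (n:ℝ) ^ (2 * c)))) := by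
        refine ENNReal.ofReal_le_ofReal ?_
        have hgn : g n = (n:ℝ) ^ (2 * c) := by rw [hgdef]
        rw [← hgn]
        refine mul_le_mul_of_nonneg_right ?_ (Real.exp_pos _).le
        calc (8 * lam n) ^ d = 8 ^ d * lam n ^ d := by rw [mul_pow]
          _ ≤ 8 ^ d * ((n:ℝ) / δ) := mul_le_mul_of_nonneg_left hlamdn (by positivity)
          _ = A * n := by rw [hAdef]; field_simp
  -- Borel-Cantelli
  set s : ℕ → Set ΩZ := fun n => if n < N then ∅ else Bad n with hsdef
  have hμb : ∀ n : ℕ, PZ (s n) ≤ ENNReal.ofReal (A * n * Real.exp (-(b * (n:ℝ) ^ (2 * c)))) := by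
    intro n
    by_cases hn : n < N
    · rw [hsdef]; simp only [if_pos hn, measure_empty]; exact zero_le
    · rw [hsdef]; simp only [if_neg hn]; exact key n (not_lt.mp hn)
  have hsummable : Summable (fun n : ℕ => A * n * Real.exp (-(b * (n:ℝ) ^ (2 * c)))) := by
    have := (summable_mul_exp_neg_rpow hb0 (by linarith : (0:ℝ) < 2 * c)).mul_left A
    simpa [mul_assoc] using this
  have htsum : ∑' n, PZ (s n) ≠ ⊤ := by
    have hnonneg : ∀ n : ℕ, 0 ≤ A * n * Real.exp (-(b * (n:ℝ) ^ (2 * c))) := fun n => by positivity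
    refine ne_of_lt (lt_of_le_of_lt (ENNReal.tsum_le_tsum hμb) ?_)
    rw [← ENNReal.ofReal_tsum_of_nonneg hnonneg hsummable]
    exact ENNReal.ofReal_lt_top
  have hBC := MeasureTheory.ae_eventually_notMem (μ := PZ) htsum
  filter_upwards [hBC] with ω hω
  have hev2 : ∀ᶠ n : ℕ in atTop, N ≤ n ∧ ω ∉ s n := (eventually_ge_atTop N).and hω
  filter_upwards [hev2] with n hn
  obtain ⟨hnN, hns⟩ := hn
  have hnotbad : ω ∉ Bad n := by
    rw [hsdef] at hns
    simpa [if_neg (not_lt.mpr hnN)] using hns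
  intro ℓ hℓ
  rw [hTeq n]
  by_contra hlt
  push_neg at hlt
  exact hnotbad ⟨ℓ, hℓ, hlt⟩

end SpatialStmt7
end
end

section
/- Coupling lemma for approximately independent coordinates (Lemma A.3). Let m ∈ N and let Q be a probability measure on a product measurable space (∏_{i=1}^m Ω_i, ⊗_{i=1}^m Σ_i) with marginal measures Q_i on (Ω_i, Σ_i). Let h be a bounded measurable function on the product space with |h| ≤ M_h < ∞. For 1 ≤ a ≤ b ≤ m, let Q_a^b denote the marginal of Q on (∏_{i=a}^b Ω_i, ⊗_{i=a}^b Σ_i). Suppose that for some τ > 0 and all 1 ≤ k ≤ m − 1, ‖Q − Q_1^k × Q_{k+1}^m‖_TV ≤ 2τ. Then |∫ h dQ − ∫ h dP| ≤ 2 M_h (m − 1) τ, where P = ∏_{i=1}^m Q_i is the product of the one-dimensional marginals. -/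
open MeasureTheory

namespace CouplingAux
variable {β : Type*} [MeasurableSpace β]

lemma integrable_of_abs_le (μ : Measure β) [IsFiniteMeasure μ]
    {g : β → ℝ} (hg : Measurable g) {M : ℝ} (hM : ∀ y, |g y| ≤ M) : Integrable g μ :=
  (integrable_const M).mono' hg.aestronglyMeasurable
    (Filter.Eventually.of_forall fun y => (Real.norm_eq_abs _).le.trans_eq' (congrArg _ rfl) |>.trans (hM y))

lemma abs_integral_sub_le_of_le {μ ν : Measure β}
    [IsFiniteMeasure μ] [IsFiniteMeasure ν] (hle : ν ≤ μ)
    {g : β → ℝ} (hg : Measurable g) {M : ℝ} (hM : ∀ y, |g y| ≤ M) :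
    |∫ y, g y ∂μ - ∫ y, g y ∂ν| ≤ M * ((μ Set.univ).toReal - (ν Set.univ).toReal) := by
  haveI : IsFiniteMeasure (μ - ν) :=
    isFiniteMeasure_of_le μ Measure.sub_le
  have h1 : μ - ν + ν = μ := Measure.sub_add_cancel_of_le hle
  have hi1 : Integrable g (μ - ν) := integrable_of_abs_le _ hg hM
  have hi2 : Integrable g ν := integrable_of_abs_le _ hg hM
  have h2 : ∫ y, g y ∂μ = ∫ y, g y ∂(μ - ν) + ∫ y, g y ∂ν := by
    have := integral_add_measure hi1 hi2
    rw [h1] at this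
    linarith [this]
  have h3 : |∫ y, g y ∂(μ - ν)| ≤ M * ((μ - ν) Set.univ).toReal := by
    rw [← Real.norm_eq_abs]
    exact norm_integral_le_of_norm_le_const
      (Filter.Eventually.of_forall fun y => (Real.norm_eq_abs _).trans_le (hM y))
  have h4 : ((μ - ν) Set.univ).toReal = (μ Set.univ).toReal - (ν Set.univ).toReal := by
    rw [Measure.sub_apply MeasurableSet.univ hle,
      ENNReal.toReal_sub_of_le (hle Set.univ) (measure_ne_top μ _)]
  rw [h2]
  simpa [h4] using h3


lemma abs_integral_sub_le_of_sets (μ ν : Measure β)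
    [IsProbabilityMeasure μ] [IsProbabilityMeasure ν]
    {g : β → ℝ} (hg : Measurable g) {M : ℝ} (hM0 : 0 ≤ M) (hM : ∀ y, |g y| ≤ M)
    {τ : ℝ} (hset : ∀ B : Set β, MeasurableSet B → |(μ B).toReal - (ν B).toReal| ≤ τ) :
    |∫ y, g y ∂μ - ∫ y, g y ∂ν| ≤ 2 * M * τ := by
  obtain ⟨s, hs, hsle, hscle⟩ := hahn_decomposition (μ := μ) (ν := ν)
  have hres1 : ν.restrict s ≤ μ.restrict s := by
    refine Measure.le_iff.2 fun t ht => ?_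
    rw [Measure.restrict_apply ht, Measure.restrict_apply ht]
    exact hsle _ (ht.inter hs) Set.inter_subset_right
  have hres2 : μ.restrict sᶜ ≤ ν.restrict sᶜ := by
    refine Measure.le_iff.2 fun t ht => ?_
    rw [Measure.restrict_apply ht, Measure.restrict_apply ht]
    exact hscle _ (ht.inter hs.compl) Set.inter_subset_right
  have key1 : |∫ y in s, g y ∂μ - ∫ y in s, g y ∂ν| ≤ M * ((μ s).toReal - (ν s).toReal) := by
    simpa [Measure.restrict_apply_univ] using abs_integral_sub_le_of_le hres1 hg hM
  have key2 : |∫ y in sᶜ, g y ∂ν - ∫ y in sᶜ, g y ∂μ| ≤ M * ((ν sᶜ).toReal - (μ sᶜ).toReal) := by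
    simpa [Measure.restrict_apply_univ] using abs_integral_sub_le_of_le hres2 hg hM
  have hiμ : Integrable g μ := integrable_of_abs_le _ hg hM
  have hiν : Integrable g ν := integrable_of_abs_le _ hg hM
  have hμdec := integral_add_compl hs hiμ
  have hνdec := integral_add_compl hs hiν
  have hb1 : (μ s).toReal - (ν s).toReal ≤ τ := (abs_le.1 (hset s hs)).2
  have hb2 : (ν sᶜ).toReal - (μ sᶜ).toReal ≤ τ := by
    have := (abs_le.1 (hset sᶜ hs.compl)).1
    linarith
  have hk1 : |∫ y in s, g y ∂μ - ∫ y in s, g y ∂ν| ≤ M * τ :=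
    key1.trans (mul_le_mul_of_nonneg_left hb1 hM0)
  have hk2 : |∫ y in sᶜ, g y ∂ν - ∫ y in sᶜ, g y ∂μ| ≤ M * τ :=
    key2.trans (mul_le_mul_of_nonneg_left hb2 hM0)
  have e1 := abs_le.1 hk1
  have e2 := abs_le.1 hk2
  rw [abs_le]
  constructor <;> nlinarith [e1.1, e1.2, e2.1, e2.2, hμdec, hνdec]


lemma step_bound {γ : Type*} [MeasurableSpace γ]
    (π : Measure β) [IsProbabilityMeasure π]
    (μ ν : Measure γ) [IsProbabilityMeasure μ] [IsProbabilityMeasure ν]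
    {g : β × γ → ℝ} (hg : Measurable g) {M : ℝ} (hM0 : 0 ≤ M) (hM : ∀ p, |g p| ≤ M)
    {τ : ℝ} (hτ0 : 0 ≤ τ)
    (hset : ∀ B : Set γ, MeasurableSet B → |(μ B).toReal - (ν B).toReal| ≤ τ) :
    |∫ p, g p ∂(π.prod μ) - ∫ p, g p ∂(π.prod ν)| ≤ 2 * M * τ := by
  have hga : ∀ x : β, Measurable fun y => g (x, y) := fun x =>
    hg.comp (measurable_prodMk_left)
  have h1 : ∫ p, g p ∂(π.prod μ) = ∫ x, ∫ y, g (x, y) ∂μ ∂π :=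
    integral_prod g (integrable_of_abs_le _ hg hM)
  have h2 : ∫ p, g p ∂(π.prod ν) = ∫ x, ∫ y, g (x, y) ∂ν ∂π :=
    integral_prod g (integrable_of_abs_le _ hg hM)
  rw [h1, h2]
  have hFmeas : StronglyMeasurable fun x => ∫ y, g (x, y) ∂μ :=
    (hg.stronglyMeasurable).integral_prod_right'
  have hGmeas : StronglyMeasurable fun x => ∫ y, g (x, y) ∂ν :=
    (hg.stronglyMeasurable).integral_prod_right'
  have hFbdd : ∀ x, |∫ y, g (x, y) ∂μ| ≤ M := fun x => by
    have := norm_integral_le_of_norm_le_const (μ := μ) (f := fun y => g (x, y)) (C := M)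
      (Filter.Eventually.of_forall fun y => (Real.norm_eq_abs _).trans_le (hM _))
    simpa using this
  have hGbdd : ∀ x, |∫ y, g (x, y) ∂ν| ≤ M := fun x => by
    have := norm_integral_le_of_norm_le_const (μ := ν) (f := fun y => g (x, y)) (C := M)
      (Filter.Eventually.of_forall fun y => (Real.norm_eq_abs _).trans_le (hM _))
    simpa using this
  have hFint : Integrable (fun x => ∫ y, g (x, y) ∂μ) π :=
    (integrable_const M).mono' hFmeas.aestronglyMeasurable
      (Filter.Eventually.of_forall fun x => (Real.norm_eq_abs _).trans_le (hFbdd x))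
  have hGint : Integrable (fun x => ∫ y, g (x, y) ∂ν) π :=
    (integrable_const M).mono' hGmeas.aestronglyMeasurable
      (Filter.Eventually.of_forall fun x => (Real.norm_eq_abs _).trans_le (hGbdd x))
  rw [← integral_sub hFint hGint, ← Real.norm_eq_abs]
  have := norm_integral_le_of_norm_le_const (μ := π)
      (f := fun x => ∫ y, g (x, y) ∂μ - ∫ y, g (x, y) ∂ν) (C := 2 * M * τ)
      (Filter.Eventually.of_forall fun x => by
        rw [Real.norm_eq_abs]
        exact abs_integral_sub_le_of_sets μ ν (hga x) hM0 (fun y => hM _) hset)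
  simpa using this


section Main
variable {m : ℕ} {Ω : Fin m → Type*} [∀ i, MeasurableSpace (Ω i)]

/-- Glue a point of the first `k` coordinates and the last coordinates into a full point. -/
def glue (k : ℕ)
    (p : (∀ i : {i : Fin m // (i : ℕ) < k}, Ω i.1) × (∀ i : {i : Fin m // k ≤ (i : ℕ)}, Ω i.1)) :
    ∀ i, Ω i := fun i =>
  if hik : (i : ℕ) < k then p.1 ⟨i, hik⟩ else p.2 ⟨i, le_of_not_gt hik⟩

lemma measurable_glue (k : ℕ) : Measurable (glue (Ω := Ω) k) := by
  apply measurable_pi_lambda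
  intro i
  by_cases hik : (i : ℕ) < k
  · simp only [glue, dif_pos hik]
    exact (measurable_pi_apply _).comp measurable_fst
  · simp only [glue, dif_neg hik]
    exact (measurable_pi_apply _).comp measurable_snd

lemma glue_proj (k : ℕ) (x : ∀ i, Ω i) :
    glue k (fun i : {i : Fin m // (i : ℕ) < k} => x i.1,
            fun i : {i : Fin m // k ≤ (i : ℕ)} => x i.1) = x := by
  funext i
  simp only [glue]
  split_ifs <;> rfl

/-- Regroup: from (first `k+1`, rest from `k+1`) to (rest from `k`). -/
def rmap (k : ℕ)
    (p : (∀ i : {i : Fin m // (i : ℕ) < k + 1}, Ω i.1) ×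
         (∀ i : {i : Fin m // k + 1 ≤ (i : ℕ)}, Ω i.1)) :
    ∀ i : {i : Fin m // k ≤ (i : ℕ)}, Ω i.1 := fun i =>
  if hik : (i.1 : ℕ) < k + 1 then p.1 ⟨i.1, hik⟩ else p.2 ⟨i.1, le_of_not_gt hik⟩

lemma measurable_rmap (k : ℕ) : Measurable (rmap (Ω := Ω) k) := by
  apply measurable_pi_lambda
  intro i
  by_cases hik : (i.1 : ℕ) < k + 1
  · simp only [rmap, dif_pos hik]
    exact (measurable_pi_apply _).comp measurable_fst
  · simp only [rmap, dif_neg hik]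
    exact (measurable_pi_apply _).comp measurable_snd

lemma rmap_proj (k : ℕ) (x : ∀ i, Ω i) :
    rmap k (fun i : {i : Fin m // (i : ℕ) < k + 1} => x i.1,
            fun i : {i : Fin m // k + 1 ≤ (i : ℕ)} => x i.1)
      = fun i : {i : Fin m // k ≤ (i : ℕ)} => x i.1 := by
  funext i
  simp only [rmap]
  split_ifs <;> rfl

variable (Q : Measure (∀ i, Ω i)) [IsProbabilityMeasure Q]

lemma measurable_projL (k : ℕ) :
    Measurable fun (x : ∀ i, Ω i) (i : {i : Fin m // (i : ℕ) < k}) => x i.1 :=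
  measurable_pi_lambda _ fun i => measurable_pi_apply _

lemma measurable_projR (k : ℕ) :
    Measurable fun (x : ∀ i, Ω i) (i : {i : Fin m // k ≤ (i : ℕ)}) => x i.1 :=
  measurable_pi_lambda _ fun i => measurable_pi_apply _

lemma measurable_phi (k : ℕ) :
    Measurable fun (x : ∀ i, Ω i) =>
      ((fun i : {i : Fin m // (i : ℕ) < k} => x i.1),
       (fun i : {i : Fin m // k ≤ (i : ℕ)} => x i.1)) :=
  (measurable_projL k).prodMk (measurable_projR k)

noncomputable def qm (i : Fin m) : Measure (Ω i) := Q.map fun x => x i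

noncomputable def QL (k : ℕ) : Measure (∀ i : {i : Fin m // (i : ℕ) < k}, Ω i.1) :=
  Q.map fun x (i : {i : Fin m // (i : ℕ) < k}) => x i.1

noncomputable def QR (k : ℕ) : Measure (∀ i : {i : Fin m // k ≤ (i : ℕ)}, Ω i.1) :=
  Q.map fun x (i : {i : Fin m // k ≤ (i : ℕ)}) => x i.1

noncomputable def PL (k : ℕ) : Measure (∀ i : {i : Fin m // (i : ℕ) < k}, Ω i.1) :=
  Measure.pi fun i => qm Q i.1

noncomputable def nu (k : ℕ) : Measure (∀ i, Ω i) := ((PL Q k).prod (QR Q k)).map (glue k)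

noncomputable def QRnu (k : ℕ) : Measure (∀ i : {i : Fin m // k ≤ (i : ℕ)}, Ω i.1) :=
  ((QL Q (k + 1)).prod (QR Q (k + 1))).map (rmap k)

noncomputable def nu' (k : ℕ) : Measure (∀ i, Ω i) := ((PL Q k).prod (QRnu Q k)).map (glue k)

instance (i : Fin m) : IsProbabilityMeasure (qm Q i) :=
  Measure.isProbabilityMeasure_map (measurable_pi_apply i).aemeasurable

instance (k : ℕ) : IsProbabilityMeasure (QL Q k) :=
  Measure.isProbabilityMeasure_map (measurable_projL k).aemeasurable

instance (k : ℕ) : IsProbabilityMeasure (QR Q k) :=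
  Measure.isProbabilityMeasure_map (measurable_projR k).aemeasurable

instance (k : ℕ) : IsProbabilityMeasure (PL Q k) := by
  unfold PL; infer_instance

instance (k : ℕ) : IsProbabilityMeasure (nu Q k) :=
  Measure.isProbabilityMeasure_map (measurable_glue k).aemeasurable

instance (k : ℕ) : IsProbabilityMeasure (QRnu Q k) :=
  Measure.isProbabilityMeasure_map (measurable_rmap k).aemeasurable

instance (k : ℕ) : IsProbabilityMeasure (nu' Q k) :=
  Measure.isProbabilityMeasure_map (measurable_glue k).aemeasurable

lemma glue_preimage_pi (k : ℕ) (s : ∀ i, Set (Ω i)) :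
    glue (Ω := Ω) k ⁻¹' Set.univ.pi s =
      (Set.univ.pi fun i : {i : Fin m // (i : ℕ) < k} => s i.1) ×ˢ
      (Set.univ.pi fun i : {i : Fin m // k ≤ (i : ℕ)} => s i.1) := by
  ext ⟨a, b⟩
  simp only [Set.mem_preimage, Set.mem_univ_pi, Set.mem_prod]
  constructor
  · intro H
    refine ⟨fun i => ?_, fun i => ?_⟩
    · have := H i.1
      simp only [glue, dif_pos i.2] at this
      exact this
    · have := H i.1
      simp only [glue, dif_neg (not_lt.2 i.2)] at this
      exact this
  · rintro ⟨H1, H2⟩ i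
    simp only [glue]
    split_ifs with hik
    · exact H1 ⟨i, hik⟩
    · exact H2 ⟨i, le_of_not_gt hik⟩

lemma prod_box (k : ℕ) (μ : Measure (∀ i : {i : Fin m // k ≤ (i : ℕ)}, Ω i.1)) [SFinite μ]
    (s : ∀ i, Set (Ω i)) (hs : ∀ i, MeasurableSet (s i)) :
    (((PL Q k).prod μ).map (glue k)) (Set.univ.pi s) =
      (∏ i : {i : Fin m // (i : ℕ) < k}, qm Q i.1 (s i.1)) *
        μ (Set.univ.pi fun i : {i : Fin m // k ≤ (i : ℕ)} => s i.1) := by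
  rw [Measure.map_apply (measurable_glue k) (MeasurableSet.univ_pi hs),
    glue_preimage_pi, Measure.prod_prod, PL, Measure.pi_pi]

lemma nu_zero : nu Q 0 = Q := by
  refine (ext_of_generate_finite _ generateFrom_pi.symm isPiSystem_pi ?_ (by simp)).symm
  rintro _ ⟨s, hs, rfl⟩
  have hsm : ∀ i, MeasurableSet (s i) := fun i => hs i (Set.mem_univ i)
  rw [nu, prod_box Q 0 (QR Q 0) s hsm]
  haveI : IsEmpty {i : Fin m // (i : ℕ) < 0} := ⟨fun i => Nat.not_lt_zero _ i.2⟩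
  rw [QR, Measure.map_apply (measurable_projR 0)
    (MeasurableSet.univ_pi fun i => hsm i.1)]
  have hpre : (fun (x : ∀ i, Ω i) (i : {i : Fin m // 0 ≤ (i : ℕ)}) => x i.1) ⁻¹'
      (Set.univ.pi fun i => s i.1) = Set.univ.pi s := by
    ext x
    simp only [Set.mem_preimage, Set.mem_univ_pi]
    exact ⟨fun H i => H ⟨i, Nat.zero_le _⟩, fun H i => H i.1⟩
  rw [hpre]
  simp

lemma prod_split {M : Type*} [CommMonoid M] (k : ℕ) (hk : k < m) (f : Fin m → M) :
    ∏ i : {i : Fin m // (i : ℕ) < k + 1}, f i.1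
      = (∏ i : {i : Fin m // (i : ℕ) < k}, f i.1) * f ⟨k, hk⟩ := by
  have e1 : ∏ i : {i : Fin m // (i : ℕ) < k + 1}, f i.1
      = ∏ i ∈ Finset.univ.filter (fun i : Fin m => (i : ℕ) < k + 1), f i :=
    (Finset.prod_subtype _ (by simp) f).symm
  have e1' : ∏ i : {i : Fin m // (i : ℕ) < k}, f i.1
      = ∏ i ∈ Finset.univ.filter (fun i : Fin m => (i : ℕ) < k), f i :=
    (Finset.prod_subtype _ (by simp) f).symm
  have e2 : (Finset.univ.filter fun i : Fin m => (i : ℕ) < k + 1)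
      = insert (⟨k, hk⟩ : Fin m) (Finset.univ.filter fun i : Fin m => (i : ℕ) < k) := by
    ext i
    simp only [Finset.mem_filter, Finset.mem_univ, true_and, Finset.mem_insert, Fin.ext_iff]
    omega
  have e3 : (⟨k, hk⟩ : Fin m) ∉ (Finset.univ.filter fun i : Fin m => (i : ℕ) < k) := by simp
  rw [e1, e2, Finset.prod_insert e3, ← e1', mul_comm]

lemma prod_univ_split (hm : 1 ≤ m) (f : Fin m → ENNReal) :
    ∏ i : Fin m, f i
      = (∏ i : {i : Fin m // (i : ℕ) < m - 1}, f i.1) * f ⟨m - 1, by omega⟩ := by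
  have e1' : ∏ i : {i : Fin m // (i : ℕ) < m - 1}, f i.1
      = ∏ i ∈ Finset.univ.filter (fun i : Fin m => (i : ℕ) < m - 1), f i :=
    (Finset.prod_subtype _ (by simp) f).symm
  have e2 : (Finset.univ : Finset (Fin m))
      = insert (⟨m - 1, by omega⟩ : Fin m)
          (Finset.univ.filter fun i : Fin m => (i : ℕ) < m - 1) := by
    ext i
    have hi := i.isLt
    simp only [Finset.mem_filter, Finset.mem_univ, true_and, Finset.mem_insert,
      Fin.eq_mk_iff_val_eq]
    rw [true_iff]
    omega
  have e3 : (⟨m - 1, by omega⟩ : Fin m) ∉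
      (Finset.univ.filter fun i : Fin m => (i : ℕ) < m - 1) := by simp
  rw [e2, Finset.prod_insert e3, ← e1', mul_comm]

lemma nu_last (hm : 1 ≤ m) : nu Q (m - 1) = Measure.pi fun i => qm Q i := by
  refine (Measure.pi_eq fun s hs => ?_).symm
  rw [nu, prod_box Q (m - 1) (QR Q (m - 1)) s hs]
  have hmlt : m - 1 < m := by omega
  have h1 : (fun (x : ∀ i, Ω i) (i : {i : Fin m // m - 1 ≤ (i : ℕ)}) => x i.1) ⁻¹'
      (Set.univ.pi fun i => s i.1)
      = (fun x : ∀ i, Ω i => x ⟨m - 1, hmlt⟩) ⁻¹' s ⟨m - 1, hmlt⟩ := by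
    ext x
    simp only [Set.mem_preimage, Set.mem_univ_pi]
    constructor
    · intro H
      exact H ⟨⟨m - 1, hmlt⟩, le_refl _⟩
    · intro hx i
      have hi : i = ⟨⟨m - 1, hmlt⟩, le_refl _⟩ := by
        apply Subtype.ext
        apply Fin.ext
        have h2 := i.1.isLt
        have h3 := i.2
        simp only [Fin.val_mk]
        omega
      rw [hi]
      exact hx
  rw [QR, Measure.map_apply (measurable_projR (m - 1))
    (MeasurableSet.univ_pi fun i => hs i.1), h1,
    ← Measure.map_apply (measurable_pi_apply _) (hs _)]
  rw [prod_univ_split hm fun i => qm Q i (s i)]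
  rfl

lemma rmap_preimage_pi (k : ℕ) (hk : k < m) (s : ∀ i, Set (Ω i)) :
    rmap (Ω := Ω) k ⁻¹' (Set.univ.pi fun i : {i : Fin m // k ≤ (i : ℕ)} => s i.1) =
      ((fun a : ∀ i : {i : Fin m // (i : ℕ) < k + 1}, Ω i.1 =>
          a ⟨⟨k, hk⟩, Nat.lt_succ_self k⟩) ⁻¹' s ⟨k, hk⟩) ×ˢ
      (Set.univ.pi fun i : {i : Fin m // k + 1 ≤ (i : ℕ)} => s i.1) := by
  ext ⟨a, b⟩
  simp only [Set.mem_preimage, Set.mem_univ_pi, Set.mem_prod, Set.mem_preimage]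
  constructor
  · intro H
    refine ⟨?_, fun i => ?_⟩
    · have := H ⟨⟨k, hk⟩, le_refl k⟩
      simp only [rmap, dif_pos (Nat.lt_succ_self k)] at this
      exact this
    · have := H ⟨i.1, Nat.le_of_succ_le i.2⟩
      simp only [rmap, dif_neg (not_lt.2 i.2)] at this
      exact this
  · rintro ⟨H1, H2⟩ ⟨i1, hki⟩
    simp only [rmap]
    split_ifs with hik
    · have hi : i1 = ⟨k, hk⟩ := Fin.ext (show (i1 : ℕ) = k by omega)
      subst hi
      exact H1
    · exact H2 ⟨i1, le_of_not_gt hik⟩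

lemma QRnu_box (k : ℕ) (hk : k < m) (s : ∀ i, Set (Ω i)) (hs : ∀ i, MeasurableSet (s i)) :
    QRnu Q k (Set.univ.pi fun i : {i : Fin m // k ≤ (i : ℕ)} => s i.1)
      = qm Q ⟨k, hk⟩ (s ⟨k, hk⟩) *
        QR Q (k + 1) (Set.univ.pi fun i : {i : Fin m // k + 1 ≤ (i : ℕ)} => s i.1) := by
  rw [QRnu, Measure.map_apply (measurable_rmap k) (MeasurableSet.univ_pi fun i => hs i.1),
    rmap_preimage_pi k hk s, Measure.prod_prod]
  congr 1
  rw [QL, Measure.map_apply (measurable_projL (k + 1)) ((measurable_pi_apply _) (hs _)),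
    qm, Measure.map_apply (measurable_pi_apply _) (hs _)]
  rfl

lemma nu'_eq (k : ℕ) (hk : k < m) : nu' Q k = nu Q (k + 1) := by
  refine ext_of_generate_finite _ generateFrom_pi.symm isPiSystem_pi ?_ (by simp)
  rintro _ ⟨s, hs, rfl⟩
  have hsm : ∀ i, MeasurableSet (s i) := fun i => hs i (Set.mem_univ i)
  rw [nu', nu, prod_box Q k (QRnu Q k) s hsm, prod_box Q (k + 1) (QR Q (k + 1)) s hsm,
    QRnu_box Q k hk s hsm, prod_split k hk (fun i => qm Q i (s i))]
  ring

lemma QR_apply_eq (k : ℕ) (B : Set (∀ i : {i : Fin m // k ≤ (i : ℕ)}, Ω i.1))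
    (hB : MeasurableSet B) :
    QR Q k B = (Q.map fun x =>
        ((fun i : {i : Fin m // (i : ℕ) < k + 1} => x i.1),
         (fun i : {i : Fin m // k + 1 ≤ (i : ℕ)} => x i.1))) (rmap k ⁻¹' B) := by
  rw [QR, Measure.map_apply (measurable_projR k) hB,
    Measure.map_apply (measurable_phi (k + 1)) ((measurable_rmap k) hB)]
  congr 1
  ext x
  simp only [Set.mem_preimage]
  rw [rmap_proj k x]

lemma QRnu_apply (k : ℕ) (B : Set (∀ i : {i : Fin m // k ≤ (i : ℕ)}, Ω i.1))
    (hB : MeasurableSet B) :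
    QRnu Q k B = ((QL Q (k + 1)).prod (QR Q (k + 1))) (rmap k ⁻¹' B) :=
  Measure.map_apply (measurable_rmap k) hB

lemma integral_nu (k : ℕ) (f : (∀ i, Ω i) → ℝ) (hf : Measurable f) :
    ∫ x, f x ∂(nu Q k) = ∫ p, f (glue k p) ∂((PL Q k).prod (QR Q k)) :=
  integral_map (measurable_glue k).aemeasurable hf.aestronglyMeasurable

lemma integral_nu' (k : ℕ) (f : (∀ i, Ω i) → ℝ) (hf : Measurable f) :
    ∫ x, f x ∂(nu' Q k) = ∫ p, f (glue k p) ∂((PL Q k).prod (QRnu Q k)) :=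
  integral_map (measurable_glue k).aemeasurable hf.aestronglyMeasurable

end Main
end CouplingAux

/-- **Coupling lemma for approximately independent coordinates** (Lemma A.3, after
Eberlein / Yu).  Let `Q` be a probability measure on a finite product space with marginals
`Q_i`, and let `h` be measurable with `|h| ≤ M_h`.  If for each `1 ≤ k ≤ m − 1` the total
variation distance between `Q` and the product of its marginal on the first `k`
coordinates with its marginal on the remaining coordinates is at most `2τ` (i.e. the
discrepancy on every measurable set is at most `τ`), then
`|∫ h dQ − ∫ h d(∏ Q_i)| ≤ 2 M_h (m − 1) τ`. -/
theorem coupling_lemma_beta_mixing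
    {m : ℕ} (hm : 1 ≤ m) {Ω : Fin m → Type*} [∀ i, MeasurableSpace (Ω i)]
    (Q : Measure (∀ i, Ω i)) [IsProbabilityMeasure Q]
    (h : (∀ i, Ω i) → ℝ) (hmeas : Measurable h)
    (Mh : ℝ) (hbdd : ∀ x, |h x| ≤ Mh)
    (τ : ℝ) (hτ : 0 < τ)
    (hTV : ∀ k : ℕ, 1 ≤ k → k ≤ m - 1 →
      ∀ A : Set ((∀ i : {i : Fin m // (i : ℕ) < k}, Ω i.1) ×
          (∀ i : {i : Fin m // k ≤ (i : ℕ)}, Ω i.1)),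
        MeasurableSet A →
        |(Q.map (fun x =>
              ((fun i : {i : Fin m // (i : ℕ) < k} => x i.1),
               (fun i : {i : Fin m // k ≤ (i : ℕ)} => x i.1))) A).toReal -
          ((Q.map fun x (i : {i : Fin m // (i : ℕ) < k}) => x i.1).prod
            (Q.map fun x (i : {i : Fin m // k ≤ (i : ℕ)}) => x i.1) A).toReal| ≤ τ) :
    |(∫ x, h x ∂Q) - ∫ x, h x ∂(Measure.pi fun i => Q.map fun x => x i)|
      ≤ 2 * Mh * ((m : ℝ) - 1) * τ := by
  classical
  have hne : Nonempty (∀ i, Ω i) := by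
    by_contra hne
    rw [not_nonempty_iff] at hne
    have h0 : (Set.univ : Set (∀ i, Ω i)) = ∅ := Set.univ_eq_empty_iff.2 hne
    have h1 := measure_univ (μ := Q)
    rw [h0] at h1
    simp at h1
  obtain ⟨x₀⟩ := hne
  have hM0 : 0 ≤ Mh := (abs_nonneg _).trans (hbdd x₀)
  have step : ∀ k : ℕ, k + 1 ≤ m - 1 →
      |∫ x, h x ∂(CouplingAux.nu Q k) - ∫ x, h x ∂(CouplingAux.nu Q (k + 1))|
        ≤ 2 * Mh * τ := by
    intro k hk
    have hkm : k < m := by omega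
    rw [← CouplingAux.nu'_eq Q k hkm, CouplingAux.integral_nu Q k h hmeas,
      CouplingAux.integral_nu' Q k h hmeas]
    refine CouplingAux.step_bound (CouplingAux.PL Q k) (CouplingAux.QR Q k)
      (CouplingAux.QRnu Q k) (hmeas.comp (CouplingAux.measurable_glue k)) hM0
      (fun p => hbdd _) hτ.le ?_
    intro B hB
    rw [CouplingAux.QR_apply_eq Q k B hB, CouplingAux.QRnu_apply Q k B hB]
    exact hTV (k + 1) (by omega) (by omega) _ (CouplingAux.measurable_rmap k hB)
  have chain : ∀ k : ℕ, k ≤ m - 1 →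
      |∫ x, h x ∂(CouplingAux.nu Q 0) - ∫ x, h x ∂(CouplingAux.nu Q k)|
        ≤ 2 * Mh * (k : ℝ) * τ := by
    intro k
    induction k with
    | zero => intro _; simp
    | succ n ih =>
      intro hk
      have h1 := ih (by omega)
      have h2 := step n (by omega)
      have h3 := abs_sub_le (∫ x, h x ∂(CouplingAux.nu Q 0))
        (∫ x, h x ∂(CouplingAux.nu Q n)) (∫ x, h x ∂(CouplingAux.nu Q (n + 1)))
      have h4 : 2 * Mh * ((n : ℝ) + 1) * τ = 2 * Mh * (n : ℝ) * τ + 2 * Mh * τ := by ring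
      push_cast
      linarith
  have final := chain (m - 1) le_rfl
  rw [CouplingAux.nu_zero Q, CouplingAux.nu_last Q hm] at final
  have hcast : ((m - 1 : ℕ) : ℝ) = (m : ℝ) - 1 := by
    push_cast [Nat.cast_sub hm]
    ring
  rw [hcast] at final
  simp only [CouplingAux.qm] at final
  exact final
end
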